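/- (Corollary 3.10, Euclidean model.) Let C > 1 and α > 1. Assume Δ^D ρ ≥ (C/ρ)·V^{λ-μ} pointwise on ℝⁿ \ ρ^{-1}{0}. Then for every φ ∈ C_c^∞(ℝⁿ \ ρ^{-1}{0}) one has ∫_{ℝⁿ} (1+ρ²)^α |∇^D φ|² V^{τ+λ-μ} dx ≥ 2(α-1)(C+1) ∫_{ℝⁿ} (1+ρ²)^{α-1} φ² V^{τ+λ-μ} dx. -/

import Mathlib

open MeasureTheory Real

noncomputable section

/-- Euclidean divergence of a vector field on `ℝⁿ`. -/
def divE {n : ℕ} (X : EuclideanSpace ℝ (Fin n) → EuclideanSpace ℝ (Fin n))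
    (x : EuclideanSpace ℝ (Fin n)) : ℝ :=
  ∑ i, fderiv ℝ X x (EuclideanSpace.single i 1) i

/-- Euclidean Laplacian. -/
def lapE {n : ℕ} (f : EuclideanSpace ℝ (Fin n) → ℝ) (x : EuclideanSpace ℝ (Fin n)) : ℝ :=
  divE (fun y => gradient f y) x

/-- `V^s = e^{s·u}`. -/
def Vpow {n : ℕ} (u : EuclideanSpace ℝ (Fin n) → ℝ) (s : ℝ)
    (x : EuclideanSpace ℝ (Fin n)) : ℝ :=
  Real.exp (s * u x)

/-- Affine gradient `∇^D f = V^{μ-λ} ∇f`. -/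
def gradD {n : ℕ} (lam mu : ℝ) (u f : EuclideanSpace ℝ (Fin n) → ℝ)
    (x : EuclideanSpace ℝ (Fin n)) : EuclideanSpace ℝ (Fin n) :=
  Vpow u (mu - lam) x • gradient f x

/-- Affine Laplacian `Δ^D f = V^{μ-λ}(Δf + (2μ + nλ)⟨∇u, ∇f⟩)`. -/
def lapD {n : ℕ} (lam mu : ℝ) (u f : EuclideanSpace ℝ (Fin n) → ℝ)
    (x : EuclideanSpace ℝ (Fin n)) : ℝ :=
  Vpow u (mu - lam) x *
    (lapE f x + (2 * mu + (n : ℝ) * lam) * (inner ℝ (gradient u x) (gradient f x) : ℝ))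

/-! ### Auxiliary lemmas -/

lemma integral_fderiv_apply_eq_zero' {n : ℕ} {h : EuclideanSpace ℝ (Fin n) → ℝ}
    (hd : ContDiff ℝ (⊤ : ℕ∞) h) (hc : HasCompactSupport h) (v : EuclideanSpace ℝ (Fin n)) :
    ∫ x, fderiv ℝ h x v = 0 := by
  have hfc : Continuous (fderiv ℝ h) := (hd.fderiv_right (m := (⊤ : ℕ∞)) (by simp)).continuous
  have h1 : Integrable (fun x => fderiv ℝ h x v * (1:ℝ)) := by
    simp only [mul_one]
    exact (hfc.clm_apply continuous_const).integrable_of_hasCompactSupport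
      (hc.fderiv_apply ℝ v)
  have h2 : Integrable (fun x => h x * fderiv ℝ (fun _ => (1:ℝ)) x v) := by
    simp only [fderiv_fun_const]; simp
  have h3 : Integrable (fun x => h x * (1:ℝ)) := by
    simp only [mul_one]
    exact hd.continuous.integrable_of_hasCompactSupport hc
  have := integral_mul_fderiv_eq_neg_fderiv_mul_of_integrable h1 h2 h3
    (fun x _ => hd.differentiable (by simp) x) (fun x _ => differentiableAt_const _)
  simp only [fderiv_fun_const] at this
  simp only [mul_one] at this ⊢
  simpa using this.symm

lemma fderiv_proj_comp' {n : ℕ} {X : EuclideanSpace ℝ (Fin n) → EuclideanSpace ℝ (Fin n)}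
    (hX : Differentiable ℝ X) (x v : EuclideanSpace ℝ (Fin n)) (i : Fin n) :
    fderiv ℝ (fun y => X y i) x v = fderiv ℝ X x v i := by
  have h1 : HasFDerivAt (fun y => X y i)
      ((EuclideanSpace.proj (𝕜 := ℝ) i).comp (fderiv ℝ X x)) x :=
    (EuclideanSpace.proj (𝕜 := ℝ) i).hasFDerivAt.comp x (hX x).hasFDerivAt
  rw [h1.fderiv]
  rfl

lemma integral_divE_eq_zero {n : ℕ} {X : EuclideanSpace ℝ (Fin n) → EuclideanSpace ℝ (Fin n)}
    (hd : ContDiff ℝ (⊤ : ℕ∞) X) (hc : HasCompactSupport X) :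
    ∫ x, divE X x = 0 := by
  have hXi : ∀ i : Fin n, ContDiff ℝ (⊤ : ℕ∞) (fun y => X y i) := by
    intro i
    exact (EuclideanSpace.proj (𝕜 := ℝ) i).contDiff.comp hd
  have hci : ∀ i : Fin n, HasCompactSupport (fun y => X y i) := by
    intro i
    exact hc.comp_left (g := fun z : EuclideanSpace ℝ (Fin n) => z i) rfl
  have key : ∀ i : Fin n, ∫ x, fderiv ℝ X x (EuclideanSpace.single i 1) i = 0 := by
    intro i
    have := integral_fderiv_apply_eq_zero' (hXi i) (hci i) (EuclideanSpace.single i 1)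
    rw [← this]
    congr 1; ext x
    exact (fderiv_proj_comp' (hd.differentiable (by simp)) x _ i).symm
  have hint : ∀ i : Fin n, Integrable (fun x => fderiv ℝ X x (EuclideanSpace.single i 1) i) := by
    intro i
    have hfc : Continuous (fderiv ℝ X) := (hd.fderiv_right (m := (⊤ : ℕ∞)) (by simp)).continuous
    apply Continuous.integrable_of_hasCompactSupport
    · exact (EuclideanSpace.proj (𝕜 := ℝ) i).continuous.comp (hfc.clm_apply continuous_const)
    · exact ((hc.fderiv ℝ).comp_left
        (g := fun L : _ →L[ℝ] EuclideanSpace ℝ (Fin n) => L (EuclideanSpace.single i 1) i)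
        (by simp))
  unfold divE
  rw [integral_finset_sum _ (fun i _ => hint i)]
  simp [key]

lemma clm_apply_eq_sum' {n : ℕ} (L : EuclideanSpace ℝ (Fin n) →L[ℝ] ℝ)
    (y : EuclideanSpace ℝ (Fin n)) :
    L y = ∑ i, L (EuclideanSpace.single i 1) * y i := by
  conv_lhs => rw [← OrthonormalBasis.sum_repr (EuclideanSpace.basisFun (Fin n) ℝ) y]
  rw [map_sum]
  simp [EuclideanSpace.basisFun_repr, smul_eq_mul, mul_comm]

lemma divE_smul' {n : ℕ} {g : EuclideanSpace ℝ (Fin n) → ℝ}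
    {Y : EuclideanSpace ℝ (Fin n) → EuclideanSpace ℝ (Fin n)}
    {x : EuclideanSpace ℝ (Fin n)}
    (hg : DifferentiableAt ℝ g x) (hY : DifferentiableAt ℝ Y x) :
    divE (fun y => g y • Y y) x = fderiv ℝ g x (Y x) + g x * divE Y x := by
  unfold divE
  rw [fderiv_fun_smul hg hY]
  simp only [ContinuousLinearMap.add_apply, ContinuousLinearMap.coe_smul',
    Pi.smul_apply, ContinuousLinearMap.smulRight_apply, PiLp.add_apply,
    PiLp.smul_apply, smul_eq_mul]
  rw [Finset.sum_add_distrib, ← Finset.mul_sum]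
  rw [clm_apply_eq_sum' (fderiv ℝ g x) (Y x)]
  ring

lemma inner_gradient_eq' {n : ℕ} (f : EuclideanSpace ℝ (Fin n) → ℝ)
    (x v : EuclideanSpace ℝ (Fin n)) :
    (inner ℝ (gradient f x) v : ℝ) = fderiv ℝ f x v := by
  simp [gradient, InnerProductSpace.toDual_symm_apply]

lemma gradient_contDiff' {n : ℕ} {f : EuclideanSpace ℝ (Fin n) → ℝ}
    (hf : ContDiff ℝ (⊤ : ℕ∞) f) : ContDiff ℝ (⊤ : ℕ∞) (fun x => gradient f x) := by
  have h1 : ContDiff ℝ (⊤ : ℕ∞) (fderiv ℝ f) := hf.fderiv_right (m := (⊤ : ℕ∞)) (by simp)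
  exact ((InnerProductSpace.toDual ℝ (EuclideanSpace ℝ (Fin n))).symm.contDiff).comp h1

lemma divX_formula' {n : ℕ} (s α : ℝ) (u ρ φ : EuclideanSpace ℝ (Fin n) → ℝ)
    (hu : ContDiff ℝ (⊤ : ℕ∞) u) (hρ : ContDiff ℝ (⊤ : ℕ∞) ρ) (hφ : ContDiff ℝ (⊤ : ℕ∞) φ)
    (x : EuclideanSpace ℝ (Fin n)) :
    divE (fun y => (φ y ^ 2 * ((1 + ρ y ^ 2) ^ (α - 1) * (ρ y * Real.exp (s * u y)))) •
        gradient ρ y) x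
      = 2 * φ x * ρ x * (1 + ρ x ^ 2) ^ (α - 1) * Real.exp (s * u x) *
          (inner ℝ (gradient φ x) (gradient ρ x) : ℝ)
        + φ x ^ 2 * Real.exp (s * u x) *
          ((α - 1) * (1 + ρ x ^ 2) ^ (α - 2) * (2 * ρ x ^ 2) * ‖gradient ρ x‖ ^ 2
            + (1 + ρ x ^ 2) ^ (α - 1) * ‖gradient ρ x‖ ^ 2
            + (1 + ρ x ^ 2) ^ (α - 1) * ρ x *
                (lapE ρ x + s * (inner ℝ (gradient u x) (gradient ρ x) : ℝ))) := by
  have hu' : HasFDerivAt u (fderiv ℝ u x) x := (hu.differentiable (by simp) x).hasFDerivAt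
  have hρ' : HasFDerivAt ρ (fderiv ℝ ρ x) x := (hρ.differentiable (by simp) x).hasFDerivAt
  have hφ' : HasFDerivAt φ (fderiv ℝ φ x) x := (hφ.differentiable (by simp) x).hasFDerivAt
  have hqpos : (0:ℝ) < 1 + ρ x ^ 2 := by positivity
  have hρsq : HasFDerivAt (fun y => ρ y ^ 2) (((2:ℝ) * ρ x ^ 1) • fderiv ℝ ρ x) x := by
    have := (hasDerivAt_pow 2 (ρ x)).comp_hasFDerivAt x hρ'
    simpa [Function.comp_def] using this
  have hq : HasFDerivAt (fun y => 1 + ρ y ^ 2)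
      (((2:ℝ) * ρ x ^ 1) • fderiv ℝ ρ x) x := hρsq.const_add 1
  have hφsq : HasFDerivAt (fun y => φ y ^ 2) (((2:ℝ) * φ x ^ 1) • fderiv ℝ φ x) x := by
    have := (hasDerivAt_pow 2 (φ x)).comp_hasFDerivAt x hφ'
    simpa [Function.comp_def] using this
  have hr : HasFDerivAt (fun y => (1 + ρ y ^ 2) ^ (α - 1))
      (((α - 1) * (1 + ρ x ^ 2) ^ (α - 1 - 1)) • (((2:ℝ) * ρ x ^ 1) • fderiv ℝ ρ x)) x :=
    hq.rpow_const (Or.inl hqpos.ne')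
  have hVd : HasFDerivAt (fun y => Real.exp (s * u y))
      (Real.exp (s * u x) • (s • fderiv ℝ u x)) x := (hu'.const_mul s).exp
  have hρV := hρ'.fun_mul hVd
  have hrρV := hr.fun_mul hρV
  have hG := hφsq.fun_mul hrρV
  rw [divE_smul' hG.differentiableAt (((gradient_contDiff' hρ).differentiable (by simp)) x),
    hG.fderiv]
  simp only [ContinuousLinearMap.add_apply, ContinuousLinearMap.coe_smul',
    Pi.smul_apply, smul_eq_mul]
  rw [← inner_gradient_eq' φ, ← inner_gradient_eq' u, ← inner_gradient_eq' ρ]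
  rw [real_inner_self_eq_norm_sq]
  have h2 : α - 1 - 1 = α - 2 := by ring
  rw [h2]
  show _ = _ + _ * _ * (_ + _ + _ * (divE (fun y => gradient ρ y) x + _))
  ring

lemma amgm_key' {ε p r0 r1 r2 V F g B : ℝ}
    (hε : 0 < ε) (hp : 0 < p) (hr0 : 0 < r0) (hr1 : 0 < r1) (hr2 : 0 < r2)
    (hrr : r1 ^ 2 = r2 * r0) (hV : 0 < V) (hg : 0 ≤ g) (hB : |B| ≤ g * V) :
    0 ≤ 2 * ε * F * p * r1 * B + ε ^ 2 * F ^ 2 * p ^ 2 * r2 * (V * V) + r0 * g ^ 2 := by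
  have hFB : -( |F| * (g * V)) ≤ F * B := by
    have h1 : |F * B| ≤ |F| * (g * V) := by
      rw [abs_mul]; exact mul_le_mul_of_nonneg_left hB (abs_nonneg F)
    linarith [neg_abs_le (F * B)]
  have e : r2 * (2 * ε * F * p * r1 * B + ε ^ 2 * F ^ 2 * p ^ 2 * r2 * (V * V) + r0 * g ^ 2)
      = (ε * |F| * p * V * r2 - g * r1) ^ 2
        + 2 * ε * p * r1 * r2 * (F * B + |F| * (g * V)) := by
    linear_combination (-(ε ^ 2 * p ^ 2 * (V * V) * r2 ^ 2)) * (sq_abs F) - g ^ 2 * hrr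
  nlinarith [sq_nonneg (ε * |F| * p * V * r2 - g * r1),
    mul_nonneg (mul_nonneg (mul_nonneg (mul_nonneg (by linarith : (0:ℝ) ≤ 2*ε) hp.le) hr1.le)
      hr2.le) (by linarith : 0 ≤ F * B + |F| * (g * V)), hr2, e]

lemma pointwise_key' {ε C p r0 r1 r2 v V F g B lap2 : ℝ}
    (hε : 0 < ε) (hC : 0 < C) (hp : 0 < p)
    (hr0 : 0 < r0) (hr1 : 0 < r1) (hr2 : 0 < r2) (hrr : r1 ^ 2 = r2 * r0)
    (hv : 0 < v) (hV : 0 < V) (hg : 0 ≤ g)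
    (hB : |B| ≤ g * V)
    (hlap : C * (V * V) ≤ p * lap2) :
    0 ≤ ε * (2 * F * p * r1 * v * B
          + F ^ 2 * v * (ε * r2 * p ^ 2 * (V * V) + r1 * (V * V) + r1 * p * lap2))
        + r0 * g ^ 2 * v - ε * (C + 1) * (r1 * F ^ 2 * (v * (V * V))) := by
  have h1 : ε * (F ^ 2 * v * (r1 * (C * (V*V)))) ≤ ε * (F ^ 2 * v * (r1 * (p * lap2))) := by
    apply mul_le_mul_of_nonneg_left _ hε.le
    apply mul_le_mul_of_nonneg_left _ (by positivity)
    exact mul_le_mul_of_nonneg_left hlap hr1.le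
  have h2 := amgm_key' hε hp hr0 hr1 hr2 hrr hV hg hB (F := F)
  nlinarith [mul_nonneg h2 hv.le]

theorem stmt7 {n : ℕ} (hn : 1 ≤ n) (lam mu : ℝ)
    (u : EuclideanSpace ℝ (Fin n) → ℝ) (hu : ContDiff ℝ (⊤ : ℕ∞) u)
    (τ : ℝ) (hτ : τ = ((n : ℝ) + 1) * lam + mu)
    (ρ : EuclideanSpace ℝ (Fin n) → ℝ) (hρsm : ContDiff ℝ (⊤ : ℕ∞) ρ)
    (hρ0 : ∀ x, 0 ≤ ρ x)
    (hρg : ∀ x, ρ x ≠ 0 → ‖gradD lam mu u ρ x‖ = 1)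
    (C α : ℝ) (hC : 1 < C) (hα : 1 < α)
    (hΔ : ∀ x, ρ x ≠ 0 → (C / ρ x) * Vpow u (lam - mu) x ≤ lapD lam mu u ρ x)
    (φ : EuclideanSpace ℝ (Fin n) → ℝ) (hφ : ContDiff ℝ (⊤ : ℕ∞) φ)
    (hφc : HasCompactSupport φ) (hφs : tsupport φ ⊆ {x | ρ x ≠ 0}) :
    ∫ x, (1 + ρ x ^ 2) ^ α * ‖gradD lam mu u φ x‖ ^ 2 * Vpow u (τ + lam - mu) x ≥
      2 * (α - 1) * (C + 1) *
        ∫ x, (1 + ρ x ^ 2) ^ (α - 1) * φ x ^ 2 * Vpow u (τ + lam - mu) x := by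
  classical
  -- notation
  have hdiv := fun x => divX_formula' (2 * mu + (n:ℝ) * lam) α u ρ φ hu hρsm hφ x
  set X : EuclideanSpace ℝ (Fin n) → EuclideanSpace ℝ (Fin n) :=
    fun y => (φ y ^ 2 * ((1 + ρ y ^ 2) ^ (α - 1) *
      (ρ y * Real.exp ((2 * mu + (n:ℝ) * lam) * u y)))) • gradient ρ y with hXdef
  set L1 : EuclideanSpace ℝ (Fin n) → ℝ :=
    fun x => (1 + ρ x ^ 2) ^ α * ‖gradD lam mu u φ x‖ ^ 2 * Vpow u (τ + lam - mu) x with hL1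
  set I1 : EuclideanSpace ℝ (Fin n) → ℝ :=
    fun x => (1 + ρ x ^ 2) ^ (α - 1) * φ x ^ 2 * Vpow u (τ + lam - mu) x with hI1
  -- basic positivity
  have hVpos : ∀ (a : ℝ) (x : EuclideanSpace ℝ (Fin n)), 0 < Vpow u a x :=
    fun a x => Real.exp_pos _
  have hqpos : ∀ x : EuclideanSpace ℝ (Fin n), (0:ℝ) < 1 + ρ x ^ 2 := fun x => by positivity
  have hεpos : (0:ℝ) < 2 * (α - 1) := by linarith
  -- smoothness of the pieces
  have hVsm : ∀ a : ℝ, ContDiff ℝ (⊤ : ℕ∞) (fun y : EuclideanSpace ℝ (Fin n) => Real.exp (a * u y)) :=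
    fun a => (contDiff_const.mul hu).exp
  have hrpow : ∀ b : ℝ, ContDiff ℝ (⊤ : ℕ∞) (fun y : EuclideanSpace ℝ (Fin n) => (1 + ρ y ^ 2) ^ b) :=
    fun b => (contDiff_const.add (hρsm.pow 2)).rpow_const_of_ne (fun x => (hqpos x).ne')
  have hGsm : ContDiff ℝ (⊤ : ℕ∞) (fun y : EuclideanSpace ℝ (Fin n) =>
      φ y ^ 2 * ((1 + ρ y ^ 2) ^ (α - 1) *
        (ρ y * Real.exp ((2 * mu + (n:ℝ) * lam) * u y)))) :=
    (hφ.pow 2).mul ((hrpow (α - 1)).mul (hρsm.mul (hVsm _)))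
  have hXsm : ContDiff ℝ (⊤ : ℕ∞) X := hGsm.smul (gradient_contDiff' hρsm)
  -- compact support of X
  have hφ0 : ∀ x ∉ tsupport φ, φ x = 0 := fun x hx => image_eq_zero_of_notMem_tsupport hx
  have hXc : HasCompactSupport X := by
    apply HasCompactSupport.intro hφc
    intro x hx
    simp [hXdef, hφ0 x hx]
  -- vanishing off the support
  have hgradφ0 : ∀ x ∉ tsupport φ, gradient φ x = 0 := by
    intro x hx
    have : fderiv ℝ φ x = 0 :=
      Function.notMem_support.mp (fun h => hx (support_fderiv_subset ℝ h))
    simp [gradient, this]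
  have hdiv0 : ∀ x ∉ tsupport φ, divE X x = 0 := by
    intro x hx
    have hU : (tsupport φ)ᶜ ∈ nhds x :=
      (isClosed_tsupport φ).isOpen_compl.mem_nhds hx
    have hev : X =ᶠ[nhds x] (fun _ => (0 : EuclideanSpace ℝ (Fin n))) := by
      filter_upwards [hU] with y hy
      simp [hXdef, hφ0 y hy]
    have : fderiv ℝ X x = 0 := by
      rw [hev.fderiv_eq]; exact fderiv_const_apply 0
    simp [divE, this]
  -- Vpow algebra
  have hVmul : ∀ (a b : ℝ) (x : EuclideanSpace ℝ (Fin n)),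
      Vpow u a x * Vpow u b x = Vpow u (a + b) x := by
    intro a b x
    simp only [Vpow, ← Real.exp_add]
    ring_nf
  have hVone : ∀ x : EuclideanSpace ℝ (Fin n),
      Vpow u (lam - mu) x * Vpow u (mu - lam) x = 1 := by
    intro x
    rw [hVmul]
    simp [Vpow]
  -- weight identities
  have wid1 : ∀ x : EuclideanSpace ℝ (Fin n),
      Vpow u (mu - lam) x ^ 2 * Vpow u (τ + lam - mu) x
        = Real.exp ((2 * mu + (n:ℝ) * lam) * u x) := by
    intro x
    simp only [Vpow, sq, ← Real.exp_add]
    congr 1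
    rw [hτ]; ring
  have wid2 : ∀ x : EuclideanSpace ℝ (Fin n),
      Real.exp ((2 * mu + (n:ℝ) * lam) * u x) *
        (Vpow u (lam - mu) x * Vpow u (lam - mu) x) = Vpow u (τ + lam - mu) x := by
    intro x
    simp only [Vpow, ← Real.exp_add]
    congr 1
    rw [hτ]; ring
  -- pointwise inequality
  have hpt : ∀ x, 0 ≤ 2 * (α - 1) * divE X x + L1 x - 2 * (α - 1) * (C + 1) * I1 x := by
    intro x
    by_cases hx : x ∈ tsupport φ
    · -- main case
      have hρx : ρ x ≠ 0 := hφs hx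
      have hρpos : 0 < ρ x := lt_of_le_of_ne (hρ0 x) (Ne.symm hρx)
      -- norm of gradient of ρ
      have hgr : ‖gradient ρ x‖ = Vpow u (lam - mu) x := by
        have h1 := hρg x hρx
        rw [gradD, norm_smul, Real.norm_eq_abs,
          abs_of_pos (hVpos (mu - lam) x)] at h1
        have h3 : ‖gradient ρ x‖
            = Vpow u (lam - mu) x * (Vpow u (mu - lam) x * ‖gradient ρ x‖) := by
          rw [← mul_assoc, hVone x, one_mul]
        rw [h3, h1, mul_one]
      -- Laplacian lower bound
      have hlap : C * (Vpow u (lam - mu) x * Vpow u (lam - mu) x) ≤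
          ρ x * (lapE ρ x + (2 * mu + (n:ℝ) * lam) *
            (inner ℝ (gradient u x) (gradient ρ x) : ℝ)) := by
        have h := hΔ x hρx
        rw [lapD] at h
        set A : ℝ := inner ℝ (gradient u x) (gradient ρ x)
        set Lp : ℝ := lapE ρ x + (2 * mu + (n:ℝ) * lam) * A with hLp
        have h2 := mul_le_mul_of_nonneg_left h
          (le_of_lt (mul_pos hρpos (hVpos (lam - mu) x)))
        have e1 : ρ x * Vpow u (lam - mu) x * (C / ρ x * Vpow u (lam - mu) x)
            = C * (Vpow u (lam - mu) x * Vpow u (lam - mu) x) := by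
          field_simp
        have e2 : ρ x * Vpow u (lam - mu) x * (Vpow u (mu - lam) x * Lp)
            = ρ x * Lp := by
          linear_combination (ρ x * Lp) * hVone x
        rw [e1, e2] at h2
        exact h2
      -- rewrite L1 and I1
      have hnormD : ‖gradD lam mu u φ x‖ = Vpow u (mu - lam) x * ‖gradient φ x‖ := by
        rw [gradD, norm_smul, Real.norm_eq_abs, abs_of_pos (hVpos (mu - lam) x)]
      have eL : L1 x = (1 + ρ x ^ 2) ^ α * ‖gradient φ x‖ ^ 2 *
          Real.exp ((2 * mu + (n:ℝ) * lam) * u x) := by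
        simp only [hL1]
        rw [hnormD, mul_pow]
        rw [← wid1 x]
        ring
      have eI : I1 x = (1 + ρ x ^ 2) ^ (α - 1) * φ x ^ 2 *
          (Real.exp ((2 * mu + (n:ℝ) * lam) * u x) *
            (Vpow u (lam - mu) x * Vpow u (lam - mu) x)) := by
        simp only [hI1]
        rw [wid2 x]
      -- rpow algebra
      have hrr : ((1 + ρ x ^ 2) ^ (α - 1)) ^ 2
          = (1 + ρ x ^ 2) ^ (α - 2) * (1 + ρ x ^ 2) ^ α := by
        rw [sq, ← Real.rpow_add (hqpos x), ← Real.rpow_add (hqpos x)]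
        congr 1; ring
      -- inner product bound
      have hB : |(inner ℝ (gradient φ x) (gradient ρ x) : ℝ)|
          ≤ ‖gradient φ x‖ * Vpow u (lam - mu) x := by
        rw [← hgr]
        exact abs_real_inner_le_norm _ _
      have key := pointwise_key' (ε := 2 * (α - 1)) (C := C) (p := ρ x)
        (r0 := (1 + ρ x ^ 2) ^ α) (r1 := (1 + ρ x ^ 2) ^ (α - 1))
        (r2 := (1 + ρ x ^ 2) ^ (α - 2))
        (v := Real.exp ((2 * mu + (n:ℝ) * lam) * u x))
        (V := Vpow u (lam - mu) x) (F := φ x) (g := ‖gradient φ x‖)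
        (B := (inner ℝ (gradient φ x) (gradient ρ x) : ℝ))
        (lap2 := lapE ρ x + (2 * mu + (n:ℝ) * lam) *
            (inner ℝ (gradient u x) (gradient ρ x) : ℝ))
        hεpos (by linarith) hρpos
        (Real.rpow_pos_of_pos (hqpos x) _) (Real.rpow_pos_of_pos (hqpos x) _)
        (Real.rpow_pos_of_pos (hqpos x) _) hrr
        (Real.exp_pos _) (hVpos _ x) (norm_nonneg _) hB hlap
      rw [hdiv x, eL, eI, hgr]
      refine le_trans key (le_of_eq ?_)
      ring
    · -- off the support everything vanishes
      have h1 : divE X x = 0 := hdiv0 x hx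
      have h2 : L1 x = 0 := by
        simp only [hL1]
        rw [gradD, hgradφ0 x hx]
        simp
      have h3 : I1 x = 0 := by
        simp only [hI1]
        rw [hφ0 x hx]
        simp
      rw [h1, h2, h3]
      norm_num
  -- integrability
  have hcontVw : Continuous (Vpow u (τ + lam - mu)) :=
    Real.continuous_exp.comp (continuous_const.mul hu.continuous)
  have hcontL1 : Continuous L1 := by
    rw [hL1]
    apply Continuous.mul
    apply Continuous.mul
    · exact (continuous_const.add ((hρsm.continuous).pow 2)).rpow_const
        (fun x => Or.inl (hqpos x).ne')
    · exact ((Real.continuous_exp.comp (continuous_const.mul hu.continuous)).smul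
        (gradient_contDiff' hφ).continuous).norm.pow 2
    · exact hcontVw
  have hcontI1 : Continuous I1 := by
    rw [hI1]
    exact (((continuous_const.add ((hρsm.continuous).pow 2)).rpow_const
        (fun x => Or.inl (hqpos x).ne')).mul ((hφ.continuous).pow 2)).mul hcontVw
  have hcontdiv : Continuous (divE X) := by
    have hfc : Continuous (fderiv ℝ X) := (hXsm.fderiv_right (m := (⊤ : ℕ∞)) (by simp)).continuous
    unfold divE
    apply continuous_finset_sum
    intro i _
    exact (EuclideanSpace.proj (𝕜 := ℝ) i).continuous.comp (hfc.clm_apply continuous_const)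
  have hIL : Integrable L1 := hcontL1.integrable_of_hasCompactSupport
    (HasCompactSupport.intro hφc (fun x hx => by
      simp only [hL1]
      rw [gradD, hgradφ0 x hx]; simp))
  have hII : Integrable I1 := hcontI1.integrable_of_hasCompactSupport
    (HasCompactSupport.intro hφc (fun x hx => by
      simp only [hI1]
      rw [hφ0 x hx]; simp))
  have hIdiv : Integrable (divE X) := hcontdiv.integrable_of_hasCompactSupport
    (HasCompactSupport.intro hφc (fun x hx => hdiv0 x hx))
  have hint0 : ∫ x, divE X x = 0 := integral_divE_eq_zero hXsm hXc
  -- conclude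
  have h0 : 0 ≤ ∫ x, (2 * (α - 1) * divE X x + L1 x - 2 * (α - 1) * (C + 1) * I1 x) :=
    integral_nonneg hpt
  have hA : Integrable (fun x => 2 * (α - 1) * divE X x + L1 x) :=
    (hIdiv.const_mul _).add hIL
  have hB : Integrable (fun x => 2 * (α - 1) * (C + 1) * I1 x) := hII.const_mul _
  have e1 : ∫ x, (2 * (α - 1) * divE X x + L1 x - 2 * (α - 1) * (C + 1) * I1 x)
      = (∫ x, (2 * (α - 1) * divE X x + L1 x)) - ∫ x, 2 * (α - 1) * (C + 1) * I1 x :=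
    integral_sub hA hB
  have e2 : ∫ x, (2 * (α - 1) * divE X x + L1 x)
      = (∫ x, 2 * (α - 1) * divE X x) + ∫ x, L1 x :=
    integral_add (hIdiv.const_mul _) hIL
  have e3 : ∫ x, 2 * (α - 1) * divE X x = 2 * (α - 1) * ∫ x, divE X x :=
    integral_const_mul _ _
  have e4 : ∫ x, 2 * (α - 1) * (C + 1) * I1 x = 2 * (α - 1) * (C + 1) * ∫ x, I1 x :=
    integral_const_mul _ _
  rw [e1, e2, e3, e4, hint0] at h0
  rw [ge_iff_le]
  linarith
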